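/- Conservation of the spin scalar products: let x_i : ℝ → ℂ be functions with x_i(t) ≠ x_j(t) for i ≠ j and all t, and let a_i, b_i : ℝ → ℂˡ be differentiable functions satisfying for all t the spin equations of motion ȧ_i = −Σ_{j≠i} a_j·(b_j·a_i)/(x_i−x_j)² and ḃ_i = Σ_{j≠i} b_j·(b_i·a_j)/(x_i−x_j)². Then for each i the function t ↦ b_i(t)·a_i(t) is constant. -/

import Mathlib

open Finset

/-!
Along the flow, `ḃᵢ·aᵢ` and `bᵢ·ȧᵢ` are both `∑ⱼ wᵢⱼ (bᵢ·aⱼ)(bⱼ·aᵢ)`, with `wᵢⱼ = (xᵢ - xⱼ)⁻²`,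
but with opposite signs, so `bᵢ·aᵢ` has zero derivative everywhere and is constant by the mean
value theorem.
-/

theorem HasDerivAt.dotProduct {𝕜 𝔸 m : Type*} [NontriviallyNormedField 𝕜] [NormedCommRing 𝔸]
    [NormedAlgebra 𝕜 𝔸] [Fintype m] {u v : 𝕜 → m → 𝔸} {u' v' : m → 𝔸} {t : 𝕜}
    (hu : HasDerivAt u u' t) (hv : HasDerivAt v v' t) :
    HasDerivAt (fun r => u r ⬝ᵥ v r) (u' ⬝ᵥ v t + u t ⬝ᵥ v') t := by
  rw [hasDerivAt_pi] at hu hv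
  have := HasDerivAt.fun_sum (u := univ) fun α _ => (hu α).fun_mul (hv α)
  rwa [sum_add_distrib] at this

theorem sum_smul_dotProduct_add_dotProduct_neg_sum_smul_eq_zero
    {ι m R : Type*} [Fintype m] [CommRing R] (s : Finset ι) (w : ι → R)
    (a b : ι → m → R) (i : ι) :
    (∑ j ∈ s, (b i ⬝ᵥ a j * w j) • b j) ⬝ᵥ a i
      + b i ⬝ᵥ -∑ j ∈ s, (b j ⬝ᵥ a i * w j) • a j = 0 := by
  simp only [sum_dotProduct, dotProduct_neg, dotProduct_sum, smul_dotProduct, dotProduct_smul,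
    smul_eq_mul, ← sum_neg_distrib, ← sum_add_distrib]
  exact sum_eq_zero fun j _ => by ring

theorem dotProduct_const_of_hasDerivAt_spin_flow {ι m 𝔸 : Type*} [Fintype m]
    [NormedCommRing 𝔸] [NormedAlgebra ℝ 𝔸] (s : ι → Finset ι) (w : ι → ι → ℝ → 𝔸)
    (a b : ι → ℝ → m → 𝔸)
    (ha : ∀ i t, HasDerivAt (a i) (-∑ j ∈ s i, (b j t ⬝ᵥ a i t * w i j t) • a j t) t)
    (hb : ∀ i t, HasDerivAt (b i) (∑ j ∈ s i, (b i t ⬝ᵥ a j t * w i j t) • b j t) t)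
    (i : ι) (t t' : ℝ) : b i t ⬝ᵥ a i t = b i t' ⬝ᵥ a i t' := by
  have hderiv : ∀ r, HasDerivAt (fun r => b i r ⬝ᵥ a i r) 0 r := fun r => by
    convert (hb i r).dotProduct (ha i r) using 1
    exact (sum_smul_dotProduct_add_dotProduct_neg_sum_smul_eq_zero (s i) (w i · r) (a · r)
      (b · r) i).symm
  exact is_const_of_deriv_eq_zero (fun r => (hderiv r).differentiableAt)
    (fun r => (hderiv r).deriv) t t'

theorem spin_products_conserved_general (N l : ℕ)
    (x : Fin N → ℝ → ℂ) (a b : Fin N → ℝ → Fin l → ℂ)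
    (ha : ∀ (i : Fin N) (t : ℝ), HasDerivAt (a i)
      (-∑ j ∈ Finset.univ.erase i,
        ((∑ α : Fin l, b j t α * a i t α) / (x i t - x j t) ^ 2) • a j t) t)
    (hb : ∀ (i : Fin N) (t : ℝ), HasDerivAt (b i)
      (∑ j ∈ Finset.univ.erase i,
        ((∑ α : Fin l, b i t α * a j t α) / (x i t - x j t) ^ 2) • b j t) t) :
    ∀ (i : Fin N) (t s : ℝ),
      (∑ α : Fin l, b i t α * a i t α) = ∑ α : Fin l, b i s α * a i s α :=
  dotProduct_const_of_hasDerivAt_spin_flow (fun i => univ.erase i)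
    (fun i j t => ((x i t - x j t) ^ 2)⁻¹) a b
    (fun i t => by simpa only [div_eq_mul_inv, dotProduct] using ha i t)
    (fun i t => by simpa only [div_eq_mul_inv, dotProduct] using hb i t)

/-- Conservation of the spin scalar products `bᵢ·aᵢ` under the rational spin
equations of motion. -/
theorem spin_products_conserved (N l : ℕ)
    (x : Fin N → ℝ → ℂ) (a b : Fin N → ℝ → Fin l → ℂ)
    (hxne : ∀ (t : ℝ) (i j : Fin N), i ≠ j → x i t ≠ x j t)
    (ha : ∀ (i : Fin N) (t : ℝ), HasDerivAt (a i)
      (-∑ j ∈ Finset.univ.erase i,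
        ((∑ α : Fin l, b j t α * a i t α) / (x i t - x j t) ^ 2) • a j t) t)
    (hb : ∀ (i : Fin N) (t : ℝ), HasDerivAt (b i)
      (∑ j ∈ Finset.univ.erase i,
        ((∑ α : Fin l, b i t α * a j t α) / (x i t - x j t) ^ 2) • b j t) t) :
    ∀ (i : Fin N) (t s : ℝ),
      (∑ α : Fin l, b i t α * a i t α) = ∑ α : Fin l, b i s α * a i s α :=
  spin_products_conserved_general N l x a b ha hb
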